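/- Let π and σ be representations of Whittaker type of GL_n(F) and GL_m(F), respectively, admitting central characters ω_π and ω_σ. For a ∈ Fˣ let ψ_a : F → ℂˣ be the nontrivial additive character ψ_a(x) = ψ(ax). Then Γ(π × σ, ψ_a) = ω_π(a)^m · ω_σ(a)^{−n} · Γ(π × σ, ψ). -/

import Mathlib

/-!
Common setup: representations of `GL_n` over a finite field `F`, Whittaker vectors,
parabolic induction, the intertwining operator and the Shahidi gamma factor,
Bessel functions, and various auxiliary matrices.
-/

open Matrix
open scoped TensorProduct Classical

noncomputable section

namespace GammaFF

variable (F : Type) [Field F] [Fintype F] [DecidableEq F]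

/-- The sum `M 0 1 + M 1 2 + ⋯` of the superdiagonal entries of a square matrix. -/
def supDiag {k : ℕ} (M : Matrix (Fin k) (Fin k) F) : F :=
  ∑ i : Fin k, ∑ j : Fin k, if (j : ℕ) = (i : ℕ) + 1 then M i j else 0

/-- `u ∈ GL_k(F)` is an upper triangular unipotent matrix. -/
def IsUnip {k : ℕ} (u : GL (Fin k) F) : Prop :=
  (∀ i : Fin k, (u : Matrix (Fin k) (Fin k) F) i i = 1) ∧
  ∀ i j : Fin k, (j : ℕ) < (i : ℕ) → (u : Matrix (Fin k) (Fin k) F) i j = 0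

variable {F}

/-- The value at `u` of the extension `ψ(u) = ψ(u_{1,2} + u_{2,3} + ⋯ + u_{k-1,k})`
of the additive character `ψ` to the subgroup `U_k` of upper triangular unipotent
matrices. -/
def psiU {k : ℕ} (ψ : AddChar F ℂ) (u : GL (Fin k) F) : ℂ :=
  ψ (supDiag F (u : Matrix (Fin k) (Fin k) F))

variable {V W : Type} [AddCommGroup V] [Module ℂ V] [AddCommGroup W] [Module ℂ W]

/-- `v` is a `ψ`-Whittaker vector of the representation `π` of `GL_n(F)`:
`π(u) v = ψ(u) v` for all upper triangular unipotent `u`. -/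
def IsWhittakerVector {n : ℕ} (π : Representation ℂ (GL (Fin n) F) V) (ψ : AddChar F ℂ)
    (v : V) : Prop :=
  ∀ u : GL (Fin n) F, IsUnip F u → π u v = psiU ψ u • v

/-- `π` is generic: it has a nonzero `ψ`-Whittaker vector. -/
def IsGeneric {n : ℕ} (π : Representation ℂ (GL (Fin n) F) V) (ψ : AddChar F ℂ) : Prop :=
  ∃ v : V, v ≠ 0 ∧ IsWhittakerVector π ψ v

/-- `π` is of Whittaker type: its `ψ`-Whittaker vectors span a one-dimensional
subspace. -/
def WhittakerType {n : ℕ} (π : Representation ℂ (GL (Fin n) F) V) (ψ : AddChar F ℂ) : Prop :=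
  ∃ v : V, v ≠ 0 ∧ IsWhittakerVector π ψ v ∧
    ∀ w : V, IsWhittakerVector π ψ w → ∃ c : ℂ, w = c • v

/-- Isomorphism of two representations of a group `G`. -/
def RepIso {G : Type} [Group G] (π : Representation ℂ G V) (τ : Representation ℂ G W) : Prop :=
  ∃ φ : V ≃ₗ[ℂ] W, ∀ g v, φ (π g v) = τ g (φ v)

/-- `π` is (isomorphic to) a subrepresentation of `τ`. -/
def IsSubrep {G : Type} [Group G] (π : Representation ℂ G V) (τ : Representation ℂ G W) : Prop :=
  ∃ φ : V →ₗ[ℂ] W, Function.Injective φ ∧ ∀ g v, φ (π g v) = τ g (φ v)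

/-- `π` is an irreducible representation. -/
def IsIrreducibleRep {G : Type} [Group G] (π : Representation ℂ G V) : Prop :=
  Nontrivial V ∧ ∀ U : Submodule ℂ V, (∀ g, ∀ v ∈ U, π g v ∈ U) → U = ⊥ ∨ U = ⊤

/-- The order preserving identification of `Fin a ⊕ Fin b` with `Fin k` when `a + b = k`. -/
def blockEquiv {a b k : ℕ} (h : a + b = k) : Fin a ⊕ Fin b ≃ Fin k :=
  finSumFinEquiv.trans (finCongr h)

variable (F)

/-- The `k × k` block matrix `(A B; C D)` with diagonal blocks of sizes `a`, `b`,
`a + b = k`. -/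
def bmat {a b k : ℕ} (h : a + b = k) (A : Matrix (Fin a) (Fin a) F) (B : Matrix (Fin a) (Fin b) F)
    (C : Matrix (Fin b) (Fin a) F) (D : Matrix (Fin b) (Fin b) F) : Matrix (Fin k) (Fin k) F :=
  (Matrix.fromBlocks A B C D).submatrix (blockEquiv h).symm (blockEquiv h).symm

lemma bmat_mul {a b k : ℕ} (h : a + b = k) (A A' : Matrix (Fin a) (Fin a) F)
    (B B' : Matrix (Fin a) (Fin b) F) (C C' : Matrix (Fin b) (Fin a) F)
    (D D' : Matrix (Fin b) (Fin b) F) :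
    bmat F h A B C D * bmat F h A' B' C' D' =
      bmat F h (A * A' + B * C') (A * B' + B * D') (C * A' + D * C') (C * B' + D * D') := by
  unfold bmat
  rw [Matrix.submatrix_mul_equiv _ _ _ ((blockEquiv h).symm) _, Matrix.fromBlocks_multiply]

lemma bmat_one {a b k : ℕ} (h : a + b = k) :
    bmat F h (1 : Matrix (Fin a) (Fin a) F) 0 0 (1 : Matrix (Fin b) (Fin b) F) = 1 := by
  unfold bmat
  rw [Matrix.fromBlocks_one, Matrix.submatrix_one_equiv]

/-- The element `(A B; 0 D)` of the standard parabolic subgroup `P_{a,b} ≤ GL_k(F)`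
(`a + b = k`), where `A ∈ GL_a(F)`, `D ∈ GL_b(F)`, and `B` is an arbitrary `a × b`
matrix.  Every element of `P_{a,b}` has this form. -/
def pElt {a b k : ℕ} (h : a + b = k) (A : GL (Fin a) F) (B : Matrix (Fin a) (Fin b) F)
    (D : GL (Fin b) F) : GL (Fin k) F where
  val := bmat F h (A : Matrix (Fin a) (Fin a) F) B 0 (D : Matrix (Fin b) (Fin b) F)
  inv := bmat F h ((A⁻¹ : GL (Fin a) F) : Matrix (Fin a) (Fin a) F)
    (-(((A⁻¹ : GL (Fin a) F) : Matrix (Fin a) (Fin a) F) * B *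
       ((D⁻¹ : GL (Fin b) F) : Matrix (Fin b) (Fin b) F))) 0
    ((D⁻¹ : GL (Fin b) F) : Matrix (Fin b) (Fin b) F)
  val_inv := by
    rw [bmat_mul]
    have h1 : (A : Matrix (Fin a) (Fin a) F) * ((A⁻¹ : GL (Fin a) F) : Matrix (Fin a) (Fin a) F)
        + B * (0 : Matrix (Fin b) (Fin a) F) = 1 := by
      rw [Matrix.mul_zero, add_zero]; exact Units.mul_inv A
    have h2 : (A : Matrix (Fin a) (Fin a) F) *
        -(((A⁻¹ : GL (Fin a) F) : Matrix (Fin a) (Fin a) F) * B *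
          ((D⁻¹ : GL (Fin b) F) : Matrix (Fin b) (Fin b) F)) +
        B * ((D⁻¹ : GL (Fin b) F) : Matrix (Fin b) (Fin b) F) = 0 := by
      rw [Matrix.mul_neg, ← Matrix.mul_assoc, ← Matrix.mul_assoc, Units.mul_inv,
        Matrix.one_mul, neg_add_cancel]
    have h3 : (0 : Matrix (Fin b) (Fin a) F) * ((A⁻¹ : GL (Fin a) F) : Matrix (Fin a) (Fin a) F)
        + (D : Matrix (Fin b) (Fin b) F) * (0 : Matrix (Fin b) (Fin a) F) = 0 := by
      simp
    have h4 : (0 : Matrix (Fin b) (Fin a) F) *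
        -(((A⁻¹ : GL (Fin a) F) : Matrix (Fin a) (Fin a) F) * B *
          ((D⁻¹ : GL (Fin b) F) : Matrix (Fin b) (Fin b) F)) +
        (D : Matrix (Fin b) (Fin b) F) * ((D⁻¹ : GL (Fin b) F) : Matrix (Fin b) (Fin b) F) = 1 := by
      rw [Matrix.zero_mul, zero_add]; exact Units.mul_inv D
    rw [h1, h2, h3, h4, bmat_one]
  inv_val := by
    rw [bmat_mul]
    have h1 : ((A⁻¹ : GL (Fin a) F) : Matrix (Fin a) (Fin a) F) * (A : Matrix (Fin a) (Fin a) F)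
        + -(((A⁻¹ : GL (Fin a) F) : Matrix (Fin a) (Fin a) F) * B *
          ((D⁻¹ : GL (Fin b) F) : Matrix (Fin b) (Fin b) F)) * (0 : Matrix (Fin b) (Fin a) F) = 1 := by
      rw [Matrix.mul_zero, add_zero]; exact Units.inv_mul A
    have h2 : ((A⁻¹ : GL (Fin a) F) : Matrix (Fin a) (Fin a) F) * B +
        -(((A⁻¹ : GL (Fin a) F) : Matrix (Fin a) (Fin a) F) * B *
          ((D⁻¹ : GL (Fin b) F) : Matrix (Fin b) (Fin b) F)) * (D : Matrix (Fin b) (Fin b) F) = 0 := by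
      rw [Matrix.neg_mul, Matrix.mul_assoc
        (((A⁻¹ : GL (Fin a) F) : Matrix (Fin a) (Fin a) F) * B) _ _, Units.inv_mul,
        Matrix.mul_one, add_neg_cancel]
    have h3 : (0 : Matrix (Fin b) (Fin a) F) * (A : Matrix (Fin a) (Fin a) F)
        + ((D⁻¹ : GL (Fin b) F) : Matrix (Fin b) (Fin b) F) * (0 : Matrix (Fin b) (Fin a) F) = 0 := by
      simp
    have h4 : (0 : Matrix (Fin b) (Fin a) F) * B +
        ((D⁻¹ : GL (Fin b) F) : Matrix (Fin b) (Fin b) F) * (D : Matrix (Fin b) (Fin b) F) = 1 := by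
      rw [Matrix.zero_mul, zero_add]; exact Units.inv_mul D
    rw [h1, h2, h3, h4, bmat_one]

/-- The permutation matrix of `e` (with `1` at the entries `(i, e i)`), as an element
of `GL_k(F)`. -/
def permGL {k : ℕ} (e : Equiv.Perm (Fin k)) : GL (Fin k) F where
  val := (e.toPEquiv).toMatrix
  inv := (e.symm.toPEquiv).toMatrix
  val_inv := by
    rw [← PEquiv.toMatrix_trans, ← Equiv.toPEquiv_trans, Equiv.self_trans_symm,
      Equiv.toPEquiv_refl, PEquiv.toMatrix_refl]
  inv_val := by
    rw [← PEquiv.toMatrix_trans, ← Equiv.toPEquiv_trans, Equiv.symm_trans_self,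
      Equiv.toPEquiv_refl, PEquiv.toMatrix_refl]

/-- The block permutation matrix in `GL_k(F)` (`a + b = k`), whose upper right `a × a`
block is `I_a` and whose lower left `b × b` block is `I_b` (all other entries `0`).
In the notation of the paper, `wSwap F a b h` is the Weyl element `w_{b,a}`. -/
def wSwap (a b k : ℕ) (h : a + b = k) : GL (Fin k) F :=
  permGL F ((blockEquiv h).symm.trans ((Equiv.sumComm (Fin a) (Fin b)).trans
    (blockEquiv ((add_comm b a).trans h))))

variable {F}

/-- The space of the parabolic induction `σ ∘ π` (`σ` on `GL_m(F)`, `π` on `GL_n(F)`):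
functions `f : GL_{m+n}(F) → W ⊗ V` with `f(pg) = (σ ⊠ π)(p) f(g)` for all
`p ∈ P_{m,n}`. -/
def IndSpace {m n k : ℕ} (h : m + n = k) (σ : Representation ℂ (GL (Fin m) F) W)
    (π : Representation ℂ (GL (Fin n) F) V) :
    Submodule ℂ (GL (Fin k) F → W ⊗[ℂ] V) where
  carrier := {f | ∀ (A : GL (Fin m) F) (B : Matrix (Fin m) (Fin n) F) (D : GL (Fin n) F)
    (g : GL (Fin k) F), f (pElt F h A B D * g) = TensorProduct.map (σ A) (π D) (f g)}
  add_mem' := by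
    intro f f' hf hf' A B D g
    simp only [Pi.add_apply, hf A B D g, hf' A B D g, map_add]
  zero_mem' := by intro A B D g; simp
  smul_mem' := by
    intro c f hf A B D g
    simp only [Pi.smul_apply, hf A B D g, LinearMap.map_smul]

/-- The parabolic induction `σ ∘ π` as a representation of `GL_{m+n}(F)`, acting by
right translation on `IndSpace`. -/
def IndRep {m n k : ℕ} (h : m + n = k) (σ : Representation ℂ (GL (Fin m) F) W)
    (π : Representation ℂ (GL (Fin n) F) V) :
    Representation ℂ (GL (Fin k) F) (IndSpace h σ π) where
  toFun g := (LinearMap.funLeft ℂ (W ⊗[ℂ] V) (fun x => x * g)).restrict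
    (fun f hf => by
      intro A B D x
      simp only [LinearMap.funLeft_apply]
      rw [mul_assoc]
      exact hf A B D (x * g))
  map_one' := by
    apply LinearMap.ext
    rintro ⟨f, hf⟩
    apply Subtype.ext
    funext x
    simp [LinearMap.restrict_apply]
  map_mul' := by
    intro g₁ g₂
    apply LinearMap.ext
    rintro ⟨f, hf⟩
    apply Subtype.ext
    funext x
    simp [LinearMap.restrict_apply, Module.End.mul_apply, mul_assoc]
    exact congrArg f (mul_assoc x g₁ g₂).symm

/-- `f` is the `ψ`-Whittaker vector `f_{σ,π}` of the parabolic induction `σ ∘ π`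
attached to the Whittaker vectors `ξσ`, `ξπ`: it lies in the induced space, it is a
`ψ`-Whittaker vector for right translation, it is supported on the double coset
`P_{m,n} w_{n,m} U_{m+n}`, and `f(w_{n,m}) = ξσ ⊗ ξπ`. -/
def IsInducedWhittakerVector {m n k : ℕ} (h : m + n = k)
    (σ : Representation ℂ (GL (Fin m) F) W) (π : Representation ℂ (GL (Fin n) F) V)
    (ψ : AddChar F ℂ) (ξσ : W) (ξπ : V) (f : GL (Fin k) F → W ⊗[ℂ] V) : Prop :=
  f ∈ IndSpace h σ π ∧
  (∀ u : GL (Fin k) F, IsUnip F u → ∀ g, f (g * u) = psiU ψ u • f g) ∧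
  f (wSwap F m n k h) = ξσ ⊗ₜ[ℂ] ξπ ∧
  ∀ g, f g ≠ 0 → ∃ (A : GL (Fin m) F) (B : Matrix (Fin m) (Fin n) F) (D : GL (Fin n) F)
    (u : GL (Fin k) F), IsUnip F u ∧ g = pElt F h A B D * wSwap F m n k h * u

/-- The intertwining operator `U_{σ,π} : σ ∘ π → π ∘ σ`,
`(U_{σ,π} f)(g) = Σ_{u ∈ N_{n,m}} sw(f(w_{n,m} u g))`, where `sw` is the swap of the
two tensor factors. -/
def Uop {m n k : ℕ} (h : m + n = k) (f : GL (Fin k) F → W ⊗[ℂ] V) :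
    GL (Fin k) F → V ⊗[ℂ] W := fun g =>
  ∑ X : Matrix (Fin n) (Fin m) F,
    (TensorProduct.comm ℂ W V)
      (f (wSwap F m n k h * pElt F ((add_comm n m).trans h) (1 : GL (Fin n) F) X (1 : GL (Fin m) F) * g))

/-- `γ` is the Shahidi gamma factor `Γ(π × σ, ψ)` of `π` (a representation of `GL_n(F)`)
and `σ` (a representation of `GL_m(F)`): for some (equivalently, by uniqueness of
Whittaker vectors for representations of Whittaker type, any) choice of nonzero
`ψ`-Whittaker vectors `ξπ`, `ξσ`, the intertwining operator `U_{σ,π}` sends the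
Whittaker vector `f_{σ,π}` of `σ ∘ π` to `γ • f_{π,σ}`. -/
def IsShahidiGamma {n m : ℕ} (ψ : AddChar F ℂ) (π : Representation ℂ (GL (Fin n) F) V)
    (σ : Representation ℂ (GL (Fin m) F) W) (γ : ℂ) : Prop :=
  ∃ (ξπ : V) (ξσ : W) (fσπ : GL (Fin (m + n)) F → W ⊗[ℂ] V)
    (fπσ : GL (Fin (m + n)) F → V ⊗[ℂ] W),
    ξπ ≠ 0 ∧ ξσ ≠ 0 ∧ IsWhittakerVector π ψ ξπ ∧ IsWhittakerVector σ ψ ξσ ∧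
    IsInducedWhittakerVector rfl σ π ψ ξσ ξπ fσπ ∧
    IsInducedWhittakerVector (add_comm n m) π σ ψ ξπ ξσ fπσ ∧
    ∀ g, Uop rfl fσπ g = γ • fπσ g

/-- The projection `P_ψ = |U_n|⁻¹ Σ_{u ∈ U_n} ψ(u)⁻¹ π(u)` onto the subspace of
`ψ`-Whittaker vectors. -/
def besselOp {n : ℕ} (π : Representation ℂ (GL (Fin n) F) V) (ψ : AddChar F ℂ) :
    V →ₗ[ℂ] V :=
  (Fintype.card {u : GL (Fin n) F // IsUnip F u} : ℂ)⁻¹ •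
    ∑ u : {u : GL (Fin n) F // IsUnip F u}, (psiU ψ (u : GL (Fin n) F))⁻¹ • (π (u : GL (Fin n) F))

/-- The (normalized) Bessel function `J_{π,ψ}(g) = tr(P_ψ ∘ π(g))` of an irreducible
generic representation `π`. -/
def bessel {n : ℕ} (π : Representation ℂ (GL (Fin n) F) V) (ψ : AddChar F ℂ)
    (g : GL (Fin n) F) : ℂ :=
  LinearMap.trace ℂ V (besselOp π ψ ∘ₗ π g)

variable (F)

/-- `T` is a set of representatives for the left cosets `U_n\GL_n(F)`. -/
def IsTransversal {n : ℕ} (T : Finset (GL (Fin n) F)) : Prop :=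
  ∀ g : GL (Fin n) F, ∃! t, t ∈ T ∧ ∃ u, IsUnip F u ∧ g = u * t

/-- The scalar matrix `a · I_n` as an element of `GL_n(F)`. -/
def scalarGL (n : ℕ) (a : Fˣ) : GL (Fin n) F :=
  Units.map (Matrix.scalar (Fin n)).toMonoidHom a

variable {F}

/-- The representation `π` has central character `ω`. -/
def HasCentralCharacter {n : ℕ} (π : Representation ℂ (GL (Fin n) F) V) (ω : Fˣ → ℂˣ) : Prop :=
  ∀ (a : Fˣ) (v : V), π (scalarGL F n a) v = (ω a : ℂ) • v

/-- `π` is a cuspidal representation of `GL_n(F)`: for every decomposition `n = a + b`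
with `a, b ≥ 1`, the only vector invariant under the unipotent radical `N_{a,b}` is `0`.
(This is equivalent to the corresponding condition for all compositions of `n` with at
least two parts, since the unipotent radical attached to any such composition contains
the unipotent radical `N_{a,b}` with `a` its first part.) -/
def IsCuspidal {n : ℕ} (π : Representation ℂ (GL (Fin n) F) V) : Prop :=
  ∀ (a b : ℕ) (h : a + b = n), a ≠ 0 → b ≠ 0 →
    ∀ v : V, (∀ X : Matrix (Fin a) (Fin b) F, π (pElt F h 1 X 1) v = v) → v = 0

variable (F)

/-- The group homomorphism `g ↦ ᵗg⁻¹` of `GL_k(F)`. -/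
def glTransposeInv {k : ℕ} : GL (Fin k) F →* GL (Fin k) F where
  toFun g :=
    ⟨((g⁻¹ : GL (Fin k) F) : Matrix (Fin k) (Fin k) F)ᵀ, ((g : GL (Fin k) F) : Matrix (Fin k) (Fin k) F)ᵀ,
      by rw [← Matrix.transpose_mul, Units.mul_inv, Matrix.transpose_one],
      by rw [← Matrix.transpose_mul, Units.inv_mul, Matrix.transpose_one]⟩
  map_one' := by
    apply Units.ext
    simp
  map_mul' := by
    intro g h
    apply Units.ext
    show (((g * h)⁻¹ : GL (Fin k) F) : Matrix (Fin k) (Fin k) F)ᵀ = _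
    rw [_root_.mul_inv_rev]
    show ((((h⁻¹ : GL (Fin k) F) : Matrix (Fin k) (Fin k) F) *
      ((g⁻¹ : GL (Fin k) F) : Matrix (Fin k) (Fin k) F))ᵀ) = _
    rw [Matrix.transpose_mul]
    rfl

/-- The isomorphism `GL_a(F) ≅ GL_b(F)` induced by an equality `a = b`. -/
def glCongr {a b : ℕ} (h : a = b) : GL (Fin a) F ≃* GL (Fin b) F :=
  Units.mapEquiv ((Matrix.reindexAlgEquiv F F (finCongr h)).toRingEquiv.toMulEquiv)

/-- The diagonal matrix with (invertible) diagonal entries `d`, as an element of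
`GL_k(F)`. -/
def diagGL {k : ℕ} (d : Fin k → Fˣ) : GL (Fin k) F where
  val := Matrix.diagonal fun i => (d i : F)
  inv := Matrix.diagonal fun i => (((d i)⁻¹ : Fˣ) : F)
  val_inv := by
    rw [Matrix.diagonal_mul_diagonal]
    have : (fun i => ((d i : F) * (((d i)⁻¹ : Fˣ) : F))) = fun _ => (1 : F) :=
      funext fun i => Units.mul_inv _
    rw [this, Matrix.diagonal_one]
  inv_val := by
    rw [Matrix.diagonal_mul_diagonal]
    have : (fun i => ((((d i)⁻¹ : Fˣ) : F) * (d i : F))) = fun _ => (1 : F) :=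
      funext fun i => Units.inv_mul _
    rw [this, Matrix.diagonal_one]

/-- The matrix `σ_c ∈ GL_n(F)` whose upper right `(n-1) × (n-1)` block is `I_{n-1}`
and whose `(n,1)` entry is `c` (all other entries `0`). -/
def sigmaGL (n : ℕ) (c : Fˣ) : GL (Fin n) F :=
  diagGL F (fun i => if (i : ℕ) = n - 1 then c else 1) * permGL F (finRotate n)

/-- The matrix `τ_b ∈ GL_n(F)` whose `(1,n)` entry is `b` and whose lower left
`(n-1) × (n-1)` block is `I_{n-1}` (all other entries `0`). -/
def tauGL (n : ℕ) (b : Fˣ) : GL (Fin n) F :=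
  (permGL F (finRotate n))⁻¹ * diagGL F (fun i => if (i : ℕ) = n - 1 then b else 1)

/-- The diagonal matrix `d_k = diag(1, a, a², …, a^{k-1}) ∈ GL_k(F)`. -/
def dPow (k : ℕ) (a : Fˣ) : GL (Fin k) F :=
  diagGL F (fun i => a ^ (i : ℕ))

/-- The Fourier transform `F_ψ φ(y) = Σ_{x ∈ Fⁿ} φ(x) ψ(⟨x, y⟩)` of `φ : Fⁿ → ℂ`. -/
def fourier (ψ : AddChar F ℂ) {n : ℕ} (φ : (Fin n → F) → ℂ) : (Fin n → F) → ℂ :=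
  fun y => ∑ x : Fin n → F, φ x * ψ (∑ i, x i * y i)

/-- A multiplicative character `χ` of `Fˣ`, viewed as a representation of
`GL_1(F)` on `ℂ`. -/
def charRep (χ : Fˣ →* ℂˣ) : Representation ℂ (GL (Fin 1) F) ℂ where
  toFun g := ((χ (Matrix.GeneralLinearGroup.det g) : ℂ) • LinearMap.id : ℂ →ₗ[ℂ] ℂ)
  map_one' := by
    show (χ (Matrix.GeneralLinearGroup.det (1 : GL (Fin 1) F)) : ℂ) • LinearMap.id = 1
    rw [_root_.map_one, _root_.map_one, Units.val_one, one_smul]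
    rfl
  map_mul' := by
    intro g h
    apply LinearMap.ext
    intro x
    simp [Module.End.mul_apply, smul_smul, mul_comm]

/-- The equivalence `Σ i, Fin (ns i) ≃ Fin (ns 0) ⊕ Σ i, Fin (ns i.succ)`. -/
def sigmaSuccEquiv (r : ℕ) (ns : Fin (r + 1) → ℕ) :
    (Σ i : Fin (r + 1), Fin (ns i)) ≃ (Fin (ns 0) ⊕ Σ i : Fin r, Fin (ns i.succ)) where
  toFun x := Fin.cases (motive := fun i => Fin (ns i) → (Fin (ns 0) ⊕ Σ i : Fin r, Fin (ns i.succ)))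
    (fun y => Sum.inl y) (fun i y => Sum.inr ⟨i, y⟩) x.1 x.2
  invFun := Sum.elim (fun y => ⟨0, y⟩) (fun p => ⟨p.1.succ, p.2⟩)
  left_inv := by
    rintro ⟨i, y⟩
    induction i using Fin.cases <;> simp
  right_inv := by
    rintro (y | ⟨i, y⟩) <;> simp

/-- The order preserving equivalence `Σ i, Fin (ns i) ≃ Fin (∑ i, ns i)`, sending
`⟨i, x⟩` to `ns 0 + ⋯ + ns (i-1) + x` (blocks in their natural order). -/
def finSigmaEquiv : (r : ℕ) → (ns : Fin r → ℕ) → (Σ i : Fin r, Fin (ns i)) ≃ Fin (∑ i, ns i)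
  | 0, ns =>
    (Equiv.equivOfIsEmpty _ (Fin 0)).trans
      (finCongr (show (0 : ℕ) = ∑ i : Fin 0, ns i by simp))
  | (r + 1), ns =>
    (sigmaSuccEquiv r ns).trans
      ((Equiv.sumCongr (Equiv.refl (Fin (ns 0))) (finSigmaEquiv r (fun i => ns i.succ))).trans
        (finSumFinEquiv.trans (finCongr (Fin.sum_univ_succ ns).symm)))

/-- The index in `Fin (∑ j, ns j)` of the `x`-th element of the `i`-th block. -/
def blockIdx {r : ℕ} (ns : Fin r → ℕ) (i : Fin r) (x : Fin (ns i)) : Fin (∑ j, ns j) :=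
  finSigmaEquiv r ns ⟨i, x⟩

variable {F}
variable {r : ℕ} {ns : Fin r → ℕ} {Vs : Fin r → Type}
  [∀ i, AddCommGroup (Vs i)] [∀ i, Module ℂ (Vs i)]

/-- The space of the iterated parabolic induction `τ₁ ∘ ⋯ ∘ τ_r`: functions
`f : GL_{n₁ + ⋯ + n_r}(F) → V₁ ⊗ ⋯ ⊗ V_r` such that
`f(pg) = (τ₁(d₁) ⊗ ⋯ ⊗ τ_r(d_r)) f(g)` whenever `p` is block upper triangular with
diagonal blocks `d i ∈ GL_{n_i}(F)`. -/
def MultiIndSpace (τ : ∀ i, Representation ℂ (GL (Fin (ns i)) F) (Vs i)) :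
    Submodule ℂ (GL (Fin (∑ j, ns j)) F → ⨂[ℂ] i, Vs i) where
  carrier := {f | ∀ (p : GL (Fin (∑ j, ns j)) F) (d : ∀ i, GL (Fin (ns i)) F),
    (∀ (i i' : Fin r), i' < i → ∀ (x : Fin (ns i)) (x' : Fin (ns i')),
      (p : Matrix (Fin (∑ j, ns j)) (Fin (∑ j, ns j)) F) (blockIdx ns i x) (blockIdx ns i' x') = 0) →
    (∀ (i : Fin r) (x x' : Fin (ns i)),
      (p : Matrix (Fin (∑ j, ns j)) (Fin (∑ j, ns j)) F) (blockIdx ns i x) (blockIdx ns i x')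
        = ((d i : Matrix (Fin (ns i)) (Fin (ns i)) F)) x x') →
    ∀ g, f (p * g) = PiTensorProduct.map (fun i => τ i (d i)) (f g)}
  add_mem' := by
    intro f f' hf hf' p d h1 h2 g
    simp only [Pi.add_apply, hf p d h1 h2 g, hf' p d h1 h2 g, map_add]
  zero_mem' := by intro p d h1 h2 g; simp
  smul_mem' := by
    intro c f hf p d h1 h2 g
    simp only [Pi.smul_apply, hf p d h1 h2 g, LinearMap.map_smul]

/-- The iterated parabolic induction `τ₁ ∘ ⋯ ∘ τ_r` as a representation of
`GL_{n₁ + ⋯ + n_r}(F)`, acting by right translation. -/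
def MultiIndRep (τ : ∀ i, Representation ℂ (GL (Fin (ns i)) F) (Vs i)) :
    Representation ℂ (GL (Fin (∑ j, ns j)) F) (MultiIndSpace τ) where
  toFun g := (LinearMap.funLeft ℂ (⨂[ℂ] i, Vs i) (fun x => x * g)).restrict
    (fun f hf => by
      intro p d h1 h2 x
      simp only [LinearMap.funLeft_apply]
      rw [mul_assoc]
      exact hf p d h1 h2 (x * g))
  map_one' := by
    apply LinearMap.ext
    rintro ⟨f, hf⟩
    apply Subtype.ext
    funext x
    simp [LinearMap.restrict_apply]
  map_mul' := by
    intro g₁ g₂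
    apply LinearMap.ext
    rintro ⟨f, hf⟩
    apply Subtype.ext
    funext x
    simp [LinearMap.restrict_apply, Module.End.mul_apply, mul_assoc]
    exact congrArg f (mul_assoc x g₁ g₂).symm

end GammaFF

/-!
Write `d_j = diag(1, a, …, a^{j-1})`. Conjugation by `d_k` multiplies the superdiagonal of a
unipotent matrix by `a`, so it turns `ψ`-Whittaker data into `ψ_a`-Whittaker data:
`π(d_n) ξ_π` and `σ(d_m) ξ_σ` are `ψ_a`-Whittaker vectors, and `f ↦ (σ ⊠ π)(d_k) f(d_k⁻¹ · d_k)`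
carries induced `ψ`-Whittaker vectors to induced `ψ_a`-Whittaker vectors and commutes with
`U_{σ,π}`. Since `d_{m+n} = diag(d_m, a^m d_n)` and
`d_{m+n}⁻¹ w_{n,m} d_{m+n} = diag(a^n, a^{-m}) w_{n,m}`, the transports of `f_{σ,π}` and
`f_{π,σ}` take the values `ω_σ(a)^n σ(d_m)ξ_σ ⊗ π(d_n)ξ_π` and `ω_π(a)^m π(d_n)ξ_π ⊗ σ(d_m)ξ_σ`
at the Weyl elements. Removing these scalars and using the uniqueness of Whittaker vectors
gives the factor `ω_π(a)^m ω_σ(a)^{-n}`.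
-/

namespace GammaFF

lemma tmul_ne_zero {K : Type*} [Field K] {M N : Type*} [AddCommGroup M] [Module K M]
    [AddCommGroup N] [Module K N] {x : M} {y : N} (hx : x ≠ 0) (hy : y ≠ 0) : x ⊗ₜ[K] y ≠ 0 := by
  obtain ⟨φ, hφ⟩ := Module.Projective.exists_dual_ne_zero K hx
  obtain ⟨χ, hχ⟩ := Module.Projective.exists_dual_ne_zero K hy
  intro h0
  have := congrArg (fun t => TensorProduct.lid K K (TensorProduct.map φ χ t)) h0
  simp only [TensorProduct.map_tmul, TensorProduct.lid_tmul, smul_eq_mul, map_zero] at this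
  exact mul_ne_zero hφ hχ this

lemma map_mul_apply {R G H M N : Type*} [CommSemiring R] [Monoid G] [Monoid H]
    [AddCommMonoid M] [Module R M] [AddCommMonoid N] [Module R N]
    (σ : Representation R G M) (π : Representation R H N) (g g' : G) (h h' : H)
    (t : M ⊗[R] N) :
    TensorProduct.map (σ (g * g')) (π (h * h')) t =
      TensorProduct.map (σ g) (π h) (TensorProduct.map (σ g') (π h') t) := by
  rw [map_mul, map_mul, TensorProduct.map_mul, Module.End.mul_apply]

lemma apply_ne_zero {R G M : Type*} [Semiring R] [Group G] [AddCommMonoid M] [Module R M]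
    (ρ : Representation R G M) (g : G) {v : M} (hv : v ≠ 0) : ρ g v ≠ 0 :=
  (LinearMap.map_eq_zero_iff _ (ρ.apply_bijective g).injective).not.2 hv

variable {F : Type} [Field F]

lemma diagGL_mul {k : ℕ} (d d' : Fin k → Fˣ) :
    diagGL F d * diagGL F d' = diagGL F (d * d') := by
  ext : 1
  simp [diagGL, Matrix.diagonal_mul_diagonal]

lemma diagGL_inv {k : ℕ} (d : Fin k → Fˣ) : (diagGL F d)⁻¹ = diagGL F d⁻¹ := by
  ext : 1
  rfl

lemma scalarGL_eq_diagGL (n : ℕ) (c : Fˣ) : scalarGL F n c = diagGL F (fun _ => c) := by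
  ext : 1
  exact Matrix.scalar_apply (c : F)

lemma scalarGL_mul_comm {n : ℕ} (c : Fˣ) (g : GL (Fin n) F) :
    scalarGL F n c * g = g * scalarGL F n c := by
  ext : 1
  exact (Matrix.scalar_commute (c : F) (fun _ => Commute.all _ _) _).eq

lemma dPow_inv (k : ℕ) (c : Fˣ) : (dPow F k c)⁻¹ = dPow F k c⁻¹ := by
  simp only [dPow, diagGL_inv, Pi.inv_def, inv_pow]

lemma permGL_mul_diagGL {k : ℕ} (e : Equiv.Perm (Fin k)) (d : Fin k → Fˣ) :
    permGL F e * diagGL F d = diagGL F (d ∘ e) * permGL F e := by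
  ext i j : 2
  simp only [permGL, diagGL, Units.val_mul, PEquiv.toMatrix_toPEquiv_mul,
    PEquiv.mul_toMatrix_toPEquiv, Matrix.submatrix_apply, id_eq, Matrix.diagonal_apply,
    Function.comp_apply]
  by_cases h : e i = j
  · subst h; simp
  · rw [if_neg h, if_neg (fun hij => h (by rw [hij, Equiv.apply_symm_apply]))]

lemma blockEquiv_inl_val {m n k : ℕ} (h : m + n = k) (x : Fin m) :
    (blockEquiv h (Sum.inl x) : ℕ) = x := by
  simp [blockEquiv]

lemma blockEquiv_inr_val {m n k : ℕ} (h : m + n = k) (y : Fin n) :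
    (blockEquiv h (Sum.inr y) : ℕ) = m + y := by
  simp [blockEquiv]

lemma dPow_conj_apply {k : ℕ} (c : Fˣ) (u : GL (Fin k) F) (i j : Fin k) :
    (((dPow F k c)⁻¹ * u * dPow F k c : GL (Fin k) F) : Matrix (Fin k) (Fin k) F) i j =
      (c : F) ^ ((j : ℕ) - (i : ℕ) : ℤ) * (u : Matrix (Fin k) (Fin k) F) i j := by
  rw [dPow_inv]
  simp only [dPow, diagGL, Units.val_mul, Matrix.mul_diagonal, Matrix.diagonal_mul, inv_pow,
    Units.val_pow_eq_pow_val, Units.val_inv_eq_inv_val, zpow_sub₀ (Units.ne_zero c), zpow_natCast]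
  ring

lemma IsUnip.dPow_conj {k : ℕ} (c : Fˣ) {u : GL (Fin k) F} (hu : IsUnip F u) :
    IsUnip F ((dPow F k c)⁻¹ * u * dPow F k c) :=
  ⟨fun i => by simp [dPow_conj_apply, hu.1 i],
    fun i j hij => by simp [dPow_conj_apply, hu.2 i j hij]⟩

lemma psiU_dPow_conj {k : ℕ} (ψ : AddChar F ℂ) (c : Fˣ) (u : GL (Fin k) F) :
    psiU ψ ((dPow F k c)⁻¹ * u * dPow F k c) = psiU (ψ.mulShift (c : F)) u := by
  simp only [psiU, supDiag, AddChar.mulShift_apply, Finset.mul_sum, mul_ite, mul_zero,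
    dPow_conj_apply]
  congr 1
  refine Finset.sum_congr rfl fun i _ => Finset.sum_congr rfl fun j _ => ?_
  split_ifs with hij
  · rw [hij, Nat.cast_add, Nat.cast_one, add_sub_cancel_left, zpow_one]
  · rfl

variable {V W : Type} [AddCommGroup V] [Module ℂ V] [AddCommGroup W] [Module ℂ W]

lemma IsWhittakerVector.apply_dPow {n : ℕ} {π : Representation ℂ (GL (Fin n) F) V}
    {ψ : AddChar F ℂ} {v : V} (hv : IsWhittakerVector π ψ v) (c : Fˣ) :
    IsWhittakerVector π (ψ.mulShift (c : F)) (π (dPow F n c) v) := by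
  intro u hu
  have hconj : u * dPow F n c = dPow F n c * ((dPow F n c)⁻¹ * u * dPow F n c) := by group
  rw [← Module.End.mul_apply, ← map_mul, hconj, map_mul, Module.End.mul_apply,
    hv _ (hu.dPow_conj c), map_smul, psiU_dPow_conj]

lemma WhittakerType.mulShift {n : ℕ} {π : Representation ℂ (GL (Fin n) F) V}
    {ψ : AddChar F ℂ} (hπ : WhittakerType π ψ) (c : Fˣ) :
    WhittakerType π (ψ.mulShift (c : F)) := by
  obtain ⟨v, hv0, hv, hspan⟩ := hπ
  refine ⟨π (dPow F n c) v, apply_ne_zero π _ hv0, hv.apply_dPow c, fun w hw => ?_⟩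
  have hw' : IsWhittakerVector π ψ (π (dPow F n c)⁻¹ w) := by
    simpa [dPow_inv, AddChar.mulShift_mulShift] using hw.apply_dPow c⁻¹
  obtain ⟨b, hb⟩ := hspan _ hw'
  exact ⟨b, by rw [← map_smul, ← hb, Representation.self_inv_apply]⟩

lemma WhittakerType.exists_eq_smul {n : ℕ} {π : Representation ℂ (GL (Fin n) F) V}
    {ψ : AddChar F ℂ} (hπ : WhittakerType π ψ) {v w : V} (hv : IsWhittakerVector π ψ v)
    (hv0 : v ≠ 0) (hw : IsWhittakerVector π ψ w) : ∃ c : ℂ, w = c • v := by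
  obtain ⟨v₀, -, -, hspan⟩ := hπ
  obtain ⟨a, rfl⟩ := hspan v hv
  obtain ⟨b, rfl⟩ := hspan w hw
  have ha : a ≠ 0 := by rintro rfl; simp at hv0
  exact ⟨b / a, by rw [smul_smul, div_mul_cancel₀ b ha]⟩

lemma HasCentralCharacter.apply_scalarGL_pow {n : ℕ} {π : Representation ℂ (GL (Fin n) F) V}
    {ω : Fˣ → ℂˣ} (hω : HasCentralCharacter π ω) (c : Fˣ) (j : ℕ) (v : V) :
    π (scalarGL F n (c ^ j)) v = (ω c : ℂ) ^ j • v := by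
  induction j with
  | zero => simp [scalarGL]
  | succ j ih =>
    have hmul : scalarGL F n (c ^ j * c) = scalarGL F n (c ^ j) * scalarGL F n c :=
      map_mul (Units.map _) _ _
    rw [pow_succ, hmul, map_mul, Module.End.mul_apply, hω c v, map_smul, ih, smul_smul, pow_succ,
      mul_comm]

/-- `g ↦ (σ ⊠ π)(d_k) f(d_k⁻¹ g d_k)`, where `d_j = dPow F j a` and `d_k = diag(d_m, a^m d_n)`. -/
def dilate {m n k : ℕ} (a : Fˣ) (σ : Representation ℂ (GL (Fin m) F) W)
    (π : Representation ℂ (GL (Fin n) F) V) (f : GL (Fin k) F → W ⊗[ℂ] V) (g : GL (Fin k) F) :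
    W ⊗[ℂ] V :=
  TensorProduct.map (σ (dPow F m a)) (π (scalarGL F n (a ^ m) * dPow F n a))
    (f ((dPow F k a)⁻¹ * g * dPow F k a))

lemma dilate_smul {m n k : ℕ} (a : Fˣ) (σ : Representation ℂ (GL (Fin m) F) W)
    (π : Representation ℂ (GL (Fin n) F) V) (c : ℂ) (f : GL (Fin k) F → W ⊗[ℂ] V) :
    dilate a σ π (c • f) = c • dilate a σ π f :=
  funext fun _ => map_smul (TensorProduct.map _ _) c _

variable [Fintype F] [DecidableEq F]

lemma diagGL_eq_pElt {m n k : ℕ} (h : m + n = k) (d : Fin k → Fˣ) :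
    diagGL F d = pElt F h (diagGL F (d ∘ blockEquiv h ∘ Sum.inl)) 0
      (diagGL F (d ∘ blockEquiv h ∘ Sum.inr)) := by
  ext : 1
  change _ = Matrix.submatrix _ _ _
  rw [diagGL, diagGL, diagGL, Matrix.fromBlocks_diagonal, Matrix.submatrix_diagonal_equiv]
  refine congrArg Matrix.diagonal (funext fun i => ?_)
  obtain ⟨s, rfl⟩ := (blockEquiv h).surjective i
  rcases s with x | y <;> simp

lemma dPow_eq_pElt {m n k : ℕ} (h : m + n = k) (c : Fˣ) :
    dPow F k c = pElt F h (dPow F m c) 0 (scalarGL F n (c ^ m) * dPow F n c) := by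
  rw [dPow, diagGL_eq_pElt h, dPow, dPow, scalarGL_eq_diagGL, diagGL_mul]
  congr 2
  funext i
  simp [blockEquiv_inr_val, pow_add]

lemma pElt_mul {a b k : ℕ} (h : a + b = k) (A A' : GL (Fin a) F)
    (B B' : Matrix (Fin a) (Fin b) F) (D D' : GL (Fin b) F) :
    pElt F h A B D * pElt F h A' B' D' =
      pElt F h (A * A')
        ((A : Matrix (Fin a) (Fin a) F) * B' + B * (D' : Matrix (Fin b) (Fin b) F)) (D * D') := by
  ext : 1
  change bmat F h _ _ _ _ * bmat F h _ _ _ _ = bmat F h _ _ _ _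
  rw [bmat_mul]
  congr 1 <;> simp

lemma pElt_zero_inv {a b k : ℕ} (h : a + b = k) (A : GL (Fin a) F) (D : GL (Fin b) F) :
    (pElt F h A 0 D)⁻¹ = pElt F h A⁻¹ 0 D⁻¹ := by
  ext : 1
  change bmat F h _ _ _ _ = bmat F h _ _ _ _
  simp

lemma pElt_conj {a b k : ℕ} (h : a + b = k) (A A' : GL (Fin a) F)
    (B : Matrix (Fin a) (Fin b) F) (D D' : GL (Fin b) F) :
    (pElt F h A 0 D)⁻¹ * pElt F h A' B D' * pElt F h A 0 D =
      pElt F h (A⁻¹ * A' * A)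
        (((A⁻¹ : GL (Fin a) F) : Matrix (Fin a) (Fin a) F) * B * (D : Matrix (Fin b) (Fin b) F))
        (D⁻¹ * D' * D) := by
  rw [pElt_zero_inv, pElt_mul, pElt_mul]
  simp

lemma dPow_inv_mul_wSwap_mul_dPow {m n k : ℕ} (h : m + n = k) (c : Fˣ) :
    (dPow F k c)⁻¹ * wSwap F m n k h * dPow F k c =
      pElt F h (scalarGL F m (c ^ n)) 0 (scalarGL F n (c ^ m))⁻¹ * wSwap F m n k h := by
  rw [wSwap, dPow, diagGL_inv, mul_assoc, permGL_mul_diagGL, ← mul_assoc, diagGL_mul,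
    diagGL_eq_pElt h, scalarGL_eq_diagGL, scalarGL_eq_diagGL, diagGL_inv]
  congr 3 <;> funext i <;>
    simp [blockEquiv_inl_val, blockEquiv_inr_val, pow_add, Equiv.sumComm, mul_comm]

variable {m n k : ℕ} {σ : Representation ℂ (GL (Fin m) F) W}
  {π : Representation ℂ (GL (Fin n) F) V}

lemma exists_pElt_wSwap_unip_dPow_conj (h : m + n = k) (c : Fˣ) {x : GL (Fin k) F}
    (hx : ∃ A B D u, IsUnip F u ∧ x = pElt F h A B D * wSwap F m n k h * u) :
    ∃ A B D u, IsUnip F u ∧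
      (dPow F k c)⁻¹ * x * dPow F k c = pElt F h A B D * wSwap F m n k h * u := by
  obtain ⟨A, B, D, u, hu, rfl⟩ := hx
  set E := dPow F k c
  have hp := pElt_conj h (dPow F m c) A B (scalarGL F n (c ^ m) * dPow F n c) D
  rw [← dPow_eq_pElt] at hp
  have hsplit : E⁻¹ * (pElt F h A B D * wSwap F m n k h * u) * E =
      (E⁻¹ * pElt F h A B D * E) * (E⁻¹ * wSwap F m n k h * E) * (E⁻¹ * u * E) := by group
  rw [hsplit, hp, dPow_inv_mul_wSwap_mul_dPow, ← mul_assoc (pElt F h _ _ _) (pElt F h _ _ _),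
    pElt_mul]
  exact ⟨_, _, _, _, hu.dPow_conj c, rfl⟩

lemma apply_pElt_mul_of_mem_indSpace {h : m + n = k} {f : GL (Fin k) F → W ⊗[ℂ] V}
    (hf : f ∈ IndSpace h σ π) (A : GL (Fin m) F) (B : Matrix (Fin m) (Fin n) F)
    (D : GL (Fin n) F) (g : GL (Fin k) F) :
    f (pElt F h A B D * g) = TensorProduct.map (σ A) (π D) (f g) :=
  hf A B D g

namespace IsInducedWhittakerVector

variable {h : m + n = k} {ψ : AddChar F ℂ} {ξσ : W} {ξπ : V} {f : GL (Fin k) F → W ⊗[ℂ] V}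

lemma apply_pElt_wSwap_mul (hf : IsInducedWhittakerVector h σ π ψ ξσ ξπ f)
    (A : GL (Fin m) F) (B : Matrix (Fin m) (Fin n) F) (D : GL (Fin n) F)
    {u : GL (Fin k) F} (hu : IsUnip F u) :
    f (pElt F h A B D * wSwap F m n k h * u) =
      psiU ψ u • TensorProduct.map (σ A) (π D) (ξσ ⊗ₜ[ℂ] ξπ) := by
  rw [mul_assoc, apply_pElt_mul_of_mem_indSpace hf.1, hf.2.1 u hu, hf.2.2.1, map_smul]

lemma eq_smul (hf : IsInducedWhittakerVector h σ π ψ ξσ ξπ f) {ξσ' : W} {ξπ' : V}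
    {f' : GL (Fin k) F → W ⊗[ℂ] V} (hf' : IsInducedWhittakerVector h σ π ψ ξσ' ξπ' f') {c : ℂ}
    (hc : ξσ' ⊗ₜ[ℂ] ξπ' = c • ξσ ⊗ₜ[ℂ] ξπ) : f' = c • f := by
  funext g
  by_cases hg : ∃ A B D u, IsUnip F u ∧ g = pElt F h A B D * wSwap F m n k h * u
  · obtain ⟨A, B, D, u, hu, rfl⟩ := hg
    rw [Pi.smul_apply, hf.apply_pElt_wSwap_mul A B D hu, hf'.apply_pElt_wSwap_mul A B D hu, hc,
      map_smul, smul_comm]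
  · rw [Pi.smul_apply, not_imp_comm.1 (hf.2.2.2 g) hg, not_imp_comm.1 (hf'.2.2.2 g) hg,
      smul_zero]

lemma smul (hf : IsInducedWhittakerVector h σ π ψ ξσ ξπ f) (c : ℂ) :
    IsInducedWhittakerVector h σ π ψ (c • ξσ) ξπ (c • f) := by
  refine ⟨Submodule.smul_mem _ c hf.1, fun u hu g => ?_, ?_,
    fun g hg => hf.2.2.2 g (right_ne_zero_of_smul (by rwa [Pi.smul_apply] at hg))⟩
  · rw [Pi.smul_apply, Pi.smul_apply, hf.2.1 u hu g, smul_comm]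
  · rw [Pi.smul_apply, hf.2.2.1, TensorProduct.smul_tmul']

end IsInducedWhittakerVector

lemma Uop_smul (h : m + n = k) (c : ℂ) (f : GL (Fin k) F → W ⊗[ℂ] V) :
    Uop h (c • f) = c • Uop h f := by
  funext g
  simp [Uop, Finset.smul_sum]

section Dilate

variable (a : Fˣ)

lemma dilate_mem_indSpace {h : m + n = k} {f : GL (Fin k) F → W ⊗[ℂ] V}
    (hf : f ∈ IndSpace h σ π) : dilate a σ π f ∈ IndSpace h σ π := by
  intro A B D g
  set E := pElt F h (dPow F m a) 0 (scalarGL F n (a ^ m) * dPow F n a)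
  have hsplit : E⁻¹ * (pElt F h A B D * g) * E = (E⁻¹ * pElt F h A B D * E) * (E⁻¹ * g * E) := by
    group
  have hcancel {l : ℕ} (X Y : GL (Fin l) F) : X * (X⁻¹ * Y * X) = Y * X := by group
  simp only [dilate, dPow_eq_pElt h a]
  rw [hsplit, pElt_conj, apply_pElt_mul_of_mem_indSpace hf, ← map_mul_apply, hcancel, hcancel,
    map_mul_apply]

lemma dilate_wSwap_mul {h : m + n = k} {f : GL (Fin k) F → W ⊗[ℂ] V}
    (hf : f ∈ IndSpace h σ π) (x : GL (Fin k) F) :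
    dilate a σ π f (wSwap F m n k h * x) =
      TensorProduct.map (σ (scalarGL F m (a ^ n) * dPow F m a)) (π (dPow F n a))
        (f (wSwap F m n k h * ((dPow F k a)⁻¹ * x * dPow F k a))) := by
  have hsplit : (dPow F k a)⁻¹ * (wSwap F m n k h * x) * dPow F k a =
      ((dPow F k a)⁻¹ * wSwap F m n k h * dPow F k a) * ((dPow F k a)⁻¹ * x * dPow F k a) := by
    group
  rw [dilate, hsplit, dPow_inv_mul_wSwap_mul_dPow, mul_assoc, apply_pElt_mul_of_mem_indSpace hf,
    ← map_mul_apply, ← scalarGL_mul_comm (a ^ n) (dPow F m a),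
    scalarGL_mul_comm (a ^ m) (dPow F n a), mul_inv_cancel_right]

lemma isInducedWhittakerVector_dilate {h : m + n = k}
    {ψ : AddChar F ℂ} {ξσ : W} {ξπ : V} {f : GL (Fin k) F → W ⊗[ℂ] V}
    (hf : IsInducedWhittakerVector h σ π ψ ξσ ξπ f) :
    IsInducedWhittakerVector h σ π (ψ.mulShift (a : F))
      (σ (scalarGL F m (a ^ n) * dPow F m a) ξσ) (π (dPow F n a) ξπ) (dilate a σ π f) := by
  obtain ⟨hmem, hwhitt, hval, hsupp⟩ := hf
  refine ⟨dilate_mem_indSpace a hmem, fun u hu g => ?_, ?_, fun g hg => ?_⟩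
  · have hsplit : (dPow F k a)⁻¹ * (g * u) * dPow F k a =
        ((dPow F k a)⁻¹ * g * dPow F k a) * ((dPow F k a)⁻¹ * u * dPow F k a) := by
      group
    rw [dilate, hsplit, hwhitt _ (hu.dPow_conj a), map_smul, psiU_dPow_conj, dilate]
  · rw [← mul_one (wSwap F m n k h), dilate_wSwap_mul a hmem, mul_one, inv_mul_cancel, mul_one,
      hval, TensorProduct.map_tmul]
  · have hne : f ((dPow F k a)⁻¹ * g * dPow F k a) ≠ 0 := fun h0 => hg (by simp [dilate, h0])
    obtain ⟨A, B, D, u, hu, hconj⟩ := exists_pElt_wSwap_unip_dPow_conj h a⁻¹ (hsupp _ hne)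
    rw [← dPow_inv, inv_inv, show ∀ E : GL (Fin k) F, E * (E⁻¹ * g * E) * E⁻¹ = g by intro; group]
      at hconj
    exact ⟨A, B, D, u, hu, hconj⟩

lemma Uop_dilate {h : m + n = k} {f : GL (Fin k) F → W ⊗[ℂ] V} (hf : f ∈ IndSpace h σ π) :
    Uop h (dilate a σ π f) = dilate a π σ (Uop h f) := by
  funext g
  set h' : n + m = k := (add_comm n m).trans h
  set S : GL (Fin m) F := scalarGL F m (a ^ n) * dPow F m a
  set e : Matrix (Fin n) (Fin m) F → Matrix (Fin n) (Fin m) F := fun X =>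
    (((dPow F n a)⁻¹ : GL (Fin n) F) : Matrix (Fin n) (Fin n) F) * X *
      (S : Matrix (Fin m) (Fin m) F)
  have he : Function.Bijective e := by
    refine Finite.injective_iff_bijective.1 fun X Y hXY => ?_
    have := congrArg (fun Z => (dPow F n a : Matrix (Fin n) (Fin n) F) * Z *
      ((S⁻¹ : GL (Fin m) F) : Matrix (Fin m) (Fin m) F)) hXY
    simpa [e, ← Matrix.mul_assoc, Matrix.mul_assoc _ (S : Matrix (Fin m) (Fin m) F)] using this
  have hN (X : Matrix (Fin n) (Fin m) F) :
      (dPow F k a)⁻¹ * pElt F h' 1 X 1 * dPow F k a = pElt F h' 1 (e X) 1 := by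
    rw [dPow_eq_pElt h' a, pElt_conj]
    simp [e, S]
  have hsplit (X : Matrix (Fin n) (Fin m) F) :
      (dPow F k a)⁻¹ * (pElt F h' 1 X 1 * g) * dPow F k a =
        ((dPow F k a)⁻¹ * pElt F h' 1 X 1 * dPow F k a) * ((dPow F k a)⁻¹ * g * dPow F k a) := by
    group
  rw [dilate]
  simp only [Uop, map_sum]
  refine Fintype.sum_bijective e he _ _ fun X => ?_
  rw [mul_assoc (wSwap F m n k h), dilate_wSwap_mul a hf, hsplit, hN, TensorProduct.map_comm,
    ← mul_assoc (wSwap F m n k h)]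

end Dilate

namespace IsShahidiGamma

variable {ψ : AddChar F ℂ}

lemma unique (hπ : WhittakerType π ψ) (hσ : WhittakerType σ ψ) {γ₁ γ₂ : ℂ}
    (h₁ : IsShahidiGamma ψ π σ γ₁) (h₂ : IsShahidiGamma ψ π σ γ₂) : γ₁ = γ₂ := by
  obtain ⟨ξπ, ξσ, f, f', hξπ, hξσ, hWπ, hWσ, hf, hf', hU⟩ := h₁
  obtain ⟨ηπ, ησ, g, g', hηπ, hησ, hW'π, hW'σ, hg, hg', hU'⟩ := h₂
  obtain ⟨cπ, rfl⟩ := hπ.exists_eq_smul hWπ hξπ hW'π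
  obtain ⟨cσ, rfl⟩ := hσ.exists_eq_smul hWσ hξσ hW'σ
  have hgf : g = (cσ * cπ) • f := hf.eq_smul hg (TensorProduct.smul_tmul_smul _ _ _ _)
  have hgf' : g' = (cπ * cσ) • f' := hf'.eq_smul hg' (TensorProduct.smul_tmul_smul _ _ _ _)
  have hc : cπ * cσ ≠ 0 := mul_ne_zero (left_ne_zero_of_smul hηπ) (left_ne_zero_of_smul hησ)
  set w := wSwap F n m (m + n) (add_comm n m)
  have hf'w : f' w ≠ 0 := hf'.2.2.1 ▸ tmul_ne_zero hξπ hξσ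
  have key : ((cπ * cσ) * γ₁) • f' w = ((cπ * cσ) * γ₂) • f' w := by
    have := hU' w
    rw [hgf, hgf', Uop_smul, Pi.smul_apply, hU w, Pi.smul_apply, smul_smul, smul_smul,
      mul_comm cσ] at this
    rw [this, mul_comm γ₂]
  exact mul_left_cancel₀ hc (smul_left_injective ℂ hf'w key)

lemma mulShift {ωπ ωσ : Fˣ → ℂˣ} (hωπ : HasCentralCharacter π ωπ)
    (hωσ : HasCentralCharacter σ ωσ) {γ : ℂ} (hγ : IsShahidiGamma ψ π σ γ) (a : Fˣ) :
    IsShahidiGamma (ψ.mulShift (a : F)) π σ ((ωπ a : ℂ) ^ m * ((ωσ a : ℂ) ^ n)⁻¹ * γ) := by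
  obtain ⟨ξπ, ξσ, f, f', hξπ, hξσ, hWπ, hWσ, hf, hf', hU⟩ := hγ
  set cπ : ℂ := (ωπ a : ℂ) ^ m
  set cσ : ℂ := (ωσ a : ℂ) ^ n
  have hcπ : cπ ≠ 0 := pow_ne_zero _ (Units.ne_zero _)
  have hcσ : cσ ≠ 0 := pow_ne_zero _ (Units.ne_zero _)
  have hσπ := (isInducedWhittakerVector_dilate a hf).smul cσ⁻¹
  have hπσ := (isInducedWhittakerVector_dilate a hf').smul cπ⁻¹
  rw [map_mul, Module.End.mul_apply, hωσ.apply_scalarGL_pow, inv_smul_smul₀ hcσ] at hσπ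
  rw [map_mul, Module.End.mul_apply, hωπ.apply_scalarGL_pow, inv_smul_smul₀ hcπ] at hπσ
  refine ⟨_, _, _, _, apply_ne_zero π _ hξπ, apply_ne_zero σ _ hξσ, hWπ.apply_dPow a,
    hWσ.apply_dPow a, hσπ, hπσ, fun g => ?_⟩
  rw [Uop_smul, Uop_dilate a hf.1, show Uop rfl f = γ • f' from funext hU, dilate_smul]
  simp only [Pi.smul_apply, smul_smul]
  congr 1
  field_simp

end IsShahidiGamma

end GammaFF

namespace GammaFF

open Matrix
open scoped TensorProduct Classical

section Statements

variable (F : Type) [Field F] [Fintype F] [DecidableEq F]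

theorem statement3
    (ψ : AddChar F ℂ)
    {n m : ℕ}
    {V W : Type} [AddCommGroup V] [Module ℂ V]
    [AddCommGroup W] [Module ℂ W]
    (π : Representation ℂ (GL (Fin n) F) V) (σ : Representation ℂ (GL (Fin m) F) W)
    (hπ : WhittakerType π ψ) (hσ : WhittakerType σ ψ)
    (ωπ ωσ : Fˣ → ℂˣ)
    (hωπ : HasCentralCharacter π ωπ) (hωσ : HasCentralCharacter σ ωσ)
    (a : Fˣ) :
    ∀ γa γ : ℂ,
      IsShahidiGamma (ψ.mulShift (a : F)) π σ γa → IsShahidiGamma ψ π σ γ →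
      γa = (ωπ a : ℂ) ^ m * ((ωσ a : ℂ) ^ n)⁻¹ * γ :=
  fun _ _ hγa hγ => hγa.unique (hπ.mulShift a) (hσ.mulShift a) (hγ.mulShift hωπ hωσ a)

end Statements
end GammaFF
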